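/- Let P = (P₁, P₂) be a Parikh vector over a binary alphabet. For every word w with Parikh vector P, there exists a Hamiltonian path in the configuration graph G(P) starting at the vertex w. -/

import Mathlib

/-- The Parikh vector of a word `w : Fin n → Fin σ`. -/
def parikh {n σ : ℕ} (w : Fin n → Fin σ) : Fin σ → ℕ :=
  fun a => (Finset.univ.filter fun i => w i = a).card

/-- Words of length `n` over alphabet `Fin σ` with Parikh vector `P`. -/
abbrev Words (n σ : ℕ) (P : Fin σ → ℕ) := {w : Fin n → Fin σ // parikh w = P}

/-- `u` is obtained from `w` by a single 2-swap. -/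
def isSwap {n σ : ℕ} (w u : Fin n → Fin σ) : Prop :=
  ∃ i j : Fin n, i ≠ j ∧ w i ≠ w j ∧ u = w ∘ Equiv.swap i j

/-- The configuration graph `G(P)`. -/
def configGraph (n σ : ℕ) (P : Fin σ → ℕ) : SimpleGraph (Words n σ P) :=
  SimpleGraph.fromRel fun w u => isSwap w.1 u.1


/-!
Induction on the word length. Appending a letter `a` embeds `G(P - eₐ)` into `G(P)` as the words
ending in `a`, and over a binary alphabet the two such copies partition `G(P)`. Traverse the copy
containing `w` by a Hamiltonian path, then swap the last letter of its endpoint with an occurrence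
of the other letter to step into the second copy, and traverse that one. If a letter does not
occur at all, `G(P)` has a single vertex.
-/

open Function

namespace SimpleGraph.Walk

variable {V W₁ W₂ : Type*} [DecidableEq V] [DecidableEq W₁] [DecidableEq W₂]
  {G : SimpleGraph V} {G₁ : SimpleGraph W₁} {G₂ : SimpleGraph W₂}

lemma IsHamiltonian.append_cons_map {f₁ : G₁ →g G} {f₂ : G₂ →g G} (hf₁ : Injective f₁)
    (hf₂ : Injective f₂) (hcompl : IsCompl (Set.range f₁) (Set.range f₂)) {a b : W₁} {c d : W₂}
    {p : G₁.Walk a b} {q : G₂.Walk c d} (hp : p.IsHamiltonian) (hq : q.IsHamiltonian)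
    (h : G.Adj (f₁ b) (f₂ c)) : ((p.map f₁).append (cons h (q.map f₂))).IsHamiltonian := by
  intro v
  rw [support_append, support_cons, List.tail_cons, support_map, support_map, List.count_append]
  have hv : v ∈ Set.range f₁ ⊔ Set.range f₂ := hcompl.sup_eq_top ▸ Set.mem_univ v
  rcases hv with ⟨x, rfl⟩ | ⟨y, rfl⟩
  · have hx : f₁ x ∉ q.support.map f₂ := fun hmem => by
      obtain ⟨y, -, hy⟩ := List.mem_map.1 hmem
      exact Set.disjoint_left.1 hcompl.disjoint ⟨x, rfl⟩ ⟨y, hy⟩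
    rw [List.count_map_of_injective _ _ hf₁, hp, List.count_eq_zero.2 hx]
  · have hy : f₂ y ∉ p.support.map f₁ := fun hmem => by
      obtain ⟨x, -, hx⟩ := List.mem_map.1 hmem
      exact Set.disjoint_left.1 hcompl.disjoint ⟨x, hx⟩ ⟨y, rfl⟩
    rw [List.count_map_of_injective _ _ hf₂, hq, List.count_eq_zero.2 hy]

end SimpleGraph.Walk

section Words

variable {n σ : ℕ}

lemma parikh_comp_perm (w : Fin n → Fin σ) (π : Equiv.Perm (Fin n)) :
    parikh (w ∘ π) = parikh w := by
  funext x
  simp only [parikh, Finset.card_filter]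
  exact Fintype.sum_equiv π _ _ fun _ => rfl

lemma parikh_snoc (u : Fin n → Fin σ) (a : Fin σ) :
    parikh (Fin.snoc u a : Fin (n + 1) → Fin σ) = parikh u + Pi.single a 1 := by
  funext x
  simp only [parikh, Finset.card_filter, Fin.sum_univ_castSucc, Fin.snoc_castSucc, Fin.snoc_last,
    Pi.add_apply, Pi.single_apply, eq_comm]

lemma exists_apply_eq_of_parikh_pos {w : Fin n → Fin σ} {b : Fin σ} (hb : 0 < parikh w b) :
    ∃ i, w i = b := by
  simpa [parikh, Finset.card_pos, Finset.filter_nonempty_iff] using hb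

lemma apply_ne_of_parikh_eq_zero {w : Fin n → Fin σ} {c : Fin σ} (hc : parikh w c = 0) :
    ∀ i, w i ≠ c := by
  simpa [parikh, Finset.card_filter_eq_zero_iff] using hc

lemma isSwap_snoc {u v : Fin n → Fin σ} (a : Fin σ) (h : isSwap u v) :
    isSwap (Fin.snoc u a : Fin (n + 1) → Fin σ) (Fin.snoc v a) := by
  obtain ⟨i, j, hij, huv, rfl⟩ := h
  refine ⟨i.castSucc, j.castSucc, by simpa using hij, by simpa using huv, ?_⟩
  funext x
  induction x using Fin.lastCases with
  | last =>
    simp [Equiv.swap_apply_of_ne_of_ne (Fin.castSucc_lt_last i).ne' (Fin.castSucc_lt_last j).ne']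
  | cast k => simp [(Fin.castSucc_injective n).swap_apply]

variable {P Q : Fin σ → ℕ}

def snocWord (a : Fin σ) (hP : P = Q + Pi.single a 1) (u : Words n σ Q) : Words (n + 1) σ P :=
  ⟨Fin.snoc u.1 a, by rw [parikh_snoc, u.2, hP]⟩

lemma snocWord_injective (a : Fin σ) (hP : P = Q + Pi.single a 1) :
    Injective (snocWord (n := n) a hP) := fun u v h => by
  have h' : Fin.snoc (α := fun _ => Fin σ) u.1 a = Fin.snoc v.1 a := congrArg Subtype.val h
  exact Subtype.ext (Fin.snoc_injective2 h').1

def snocHom (a : Fin σ) (hP : P = Q + Pi.single a 1) :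
    configGraph n σ Q →g configGraph (n + 1) σ P where
  toFun := snocWord a hP
  map_rel' {u v} h := by
    rw [configGraph, SimpleGraph.fromRel_adj] at h ⊢
    exact ⟨(snocWord_injective a hP).ne h.1, h.2.imp (isSwap_snoc a) (isSwap_snoc a)⟩

lemma snocHom_apply_last (a : Fin σ) (hP : P = Q + Pi.single a 1) (u : Words n σ Q) :
    (snocHom a hP u).1 (Fin.last n) = a :=
  Fin.snoc_last (α := fun _ => Fin σ) _ _

lemma range_snocHom (a : Fin σ) (hP : P = Q + Pi.single a 1) :
    Set.range (snocHom (n := n) a hP) = {u | u.1 (Fin.last n) = a} := by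
  ext u
  refine ⟨?_, fun hu => ?_⟩
  · rintro ⟨v, rfl⟩
    exact snocHom_apply_last a hP v
  · have hinit : parikh (Fin.init u.1) = Q := by
      have h : parikh u.1 = P := u.2
      rw [← Fin.snoc_init_self u.1, hu, parikh_snoc] at h
      exact add_right_cancel (h.trans hP)
    refine ⟨⟨Fin.init u.1, hinit⟩, Subtype.ext ?_⟩
    change Fin.snoc (Fin.init u.1) a = u.1
    rw [← hu, Fin.snoc_init_self]

lemma exists_adj_apply_last_eq (v : Words (n + 1) σ P) {b : Fin σ} (hb : 0 < P b)
    (hvb : v.1 (Fin.last n) ≠ b) :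
    ∃ v', (configGraph (n + 1) σ P).Adj v v' ∧ v'.1 (Fin.last n) = b := by
  obtain ⟨i, hi⟩ := exists_apply_eq_of_parikh_pos (by rwa [v.2] : 0 < parikh v.1 b)
  have hil : i ≠ Fin.last n := by rintro rfl; exact hvb hi
  refine ⟨⟨v.1 ∘ Equiv.swap i (Fin.last n), by rw [parikh_comp_perm, v.2]⟩, ?_, by simpa using hi⟩
  rw [configGraph, SimpleGraph.fromRel_adj]
  refine ⟨fun h => hvb ?_, Or.inl ⟨i, Fin.last n, hil, hi ▸ hvb.symm, rfl⟩⟩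
  simpa [hi] using congrFun (congrArg Subtype.val h) (Fin.last n)

end Words

lemma subsingleton_words_of_eq_zero {n : ℕ} {P : Fin 2 → ℕ} {c : Fin 2} (hc : P c = 0) :
    Subsingleton (Words n 2 P) := by
  refine ⟨fun v w => Subtype.ext (funext fun i => ?_)⟩
  have hv := apply_ne_of_parikh_eq_zero (by rw [v.2]; exact hc) i
  have hw := apply_ne_of_parikh_eq_zero (by rw [w.2]; exact hc) i
  omega

lemma exists_isHamiltonian_succ {n : ℕ} {P : Fin 2 → ℕ} (hP : ∀ c, 0 < P c)
    (ih : ∀ (Q : Fin 2 → ℕ) (u : Words n 2 Q),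
      ∃ (v : Words n 2 Q) (p : (configGraph n 2 Q).Walk u v), p.IsHamiltonian)
    (w : Words (n + 1) 2 P) :
    ∃ (v : Words (n + 1) 2 P) (p : (configGraph (n + 1) 2 P).Walk w v), p.IsHamiltonian := by
  have hsplit : ∀ a, P = (P - Pi.single a 1) + Pi.single a 1 := fun a => by
    funext x
    rcases eq_or_ne x a with rfl | hx
    · have := hP x
      simp only [Pi.add_apply, Pi.sub_apply, Pi.single_eq_same]
      omega
    · simp [hx]
  obtain ⟨a, ha⟩ : ∃ a, w.1 (Fin.last n) = a := ⟨_, rfl⟩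
  obtain ⟨b, hba⟩ := exists_ne a
  have hcompl :
      IsCompl (Set.range (snocHom (n := n) a (hsplit a))) (Set.range (snocHom b (hsplit b))) := by
    have hb : {u : Words (n + 1) 2 P | u.1 (Fin.last n) = b} = {u | u.1 (Fin.last n) = a}ᶜ := by
      ext u
      simp only [Set.mem_ofPred_eq, Set.mem_compl_iff]
      omega
    rw [range_snocHom, range_snocHom, hb]
    exact isCompl_compl
  obtain ⟨u, hu⟩ : w ∈ Set.range (snocHom a (hsplit a)) := by rw [range_snocHom]; exact ha
  obtain ⟨v, p, hp⟩ := ih _ u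
  obtain ⟨v', hadj, hv'⟩ := exists_adj_apply_last_eq (snocHom a (hsplit a) v) (hP b)
    (by rw [snocHom_apply_last]; exact hba.symm)
  obtain ⟨u', rfl⟩ : v' ∈ Set.range (snocHom b (hsplit b)) := by rw [range_snocHom]; exact hv'
  obtain ⟨x, q, hq⟩ := ih _ u'
  subst hu
  exact ⟨_, _, hp.append_cons_map (snocWord_injective a (hsplit a))
    (snocWord_injective b (hsplit b)) hcompl hq hadj⟩

theorem stmt16_general (n : ℕ) (P : Fin 2 → ℕ) (w : Words n 2 P) :
    ∃ (v : Words n 2 P) (p : (configGraph n 2 P).Walk w v), p.IsHamiltonian := by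
  induction n generalizing P with
  | zero => exact ⟨w, .nil, .of_subsingleton⟩
  | succ n ih =>
    by_cases hP : ∀ c, 0 < P c
    · exact exists_isHamiltonian_succ hP ih w
    · obtain ⟨c, hc⟩ := not_forall.1 hP
      have := subsingleton_words_of_eq_zero (n := n + 1) (Nat.eq_zero_of_not_pos hc)
      exact ⟨w, .nil, .of_subsingleton⟩

theorem stmt16 (n : ℕ) (P : Fin 2 → ℕ) (hn : ∑ i, P i = n) (w : Words n 2 P) :
    ∃ (v : Words n 2 P) (p : (configGraph n 2 P).Walk w v), p.IsHamiltonian :=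
  stmt16_general n P w
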